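/- With the same setup as the gradient-update identity, suppose additionally some systems in the averaging set actually satisfy X⁽ⁱ⁾ = ΘⱼZ⁽ⁱ⁾ + W⁽ⁱ⁾ for Θⱼ ≠ Θ₁ (misclassified systems forming set S̄). Then the error satisfies ‖Θ̂⁺ − Θ₁‖ ≤ ‖Θ̂ − Θ₁‖·‖I − (2η/m)ΣᵢZ⁽ⁱ⁾Z⁽ⁱ⁾ᵀ‖ + (2η/m)Σᵢ‖W⁽ⁱ⁾Z⁽ⁱ⁾ᵀ‖ + ‖Θⱼ − Θ₁‖·(2η/m)·‖Σ_{i∈S̄} Z⁽ⁱ⁾Z⁽ⁱ⁾ᵀ‖. -/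

import Mathlib

open Matrix Finset

open scoped Matrix.Norms.L2Operator

/-!
Substituting the data model into the gradient step, the error splits as
`(Θ̂ - Θ₁)(I - c ∑ᵢ ZᵢZᵢᵀ) + c ∑ᵢ WᵢZᵢᵀ + (Θⱼ - Θ₁)(c ∑_{i ∈ S̄} ZᵢZᵢᵀ)` with `c = 2η/m`:
the misclassified systems contribute the extra drift `Θⱼ - Θ₁` only through their own
Gram matrices. The bound is then the triangle inequality together with submultiplicativity
of the spectral norm.
-/

section GradientStep

variable {R ι n k l : Type*} [CommRing R] [Fintype ι] [DecidableEq ι] [Fintype k] [Fintype l]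

lemma residual_mul_transpose_of_eq_ite (Θ₁ Θj Θhat : Matrix n k R) (X W : Matrix n l R)
    (Z : Matrix k l R) (P : Prop) [Decidable P] (hX : X = (if P then Θj else Θ₁) * Z + W) :
    (X - Θhat * Z) * Zᵀ
      = (Θ₁ - Θhat) * (Z * Zᵀ) + (if P then (Θj - Θ₁) * (Z * Zᵀ) else 0) + W * Zᵀ := by
  subst hX
  split_ifs <;> simp only [Matrix.sub_mul, Matrix.add_mul, Matrix.mul_assoc] <;> abel

lemma sum_residual_mul_transpose (Θ₁ Θj Θhat : Matrix n k R) (X W : ι → Matrix n l R)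
    (Z : ι → Matrix k l R) (S : Finset ι)
    (hX : ∀ i, X i = (if i ∈ S then Θj else Θ₁) * Z i + W i) :
    ∑ i, (X i - Θhat * Z i) * (Z i)ᵀ
      = (Θ₁ - Θhat) * ∑ i, Z i * (Z i)ᵀ + (Θj - Θ₁) * ∑ i ∈ S, Z i * (Z i)ᵀ
        + ∑ i, W i * (Z i)ᵀ := by
  simp only [fun i ↦ residual_mul_transpose_of_eq_ite Θ₁ Θj Θhat (X i) (W i) (Z i) _ (hX i),
    sum_add_distrib, sum_ite_mem, univ_inter, Matrix.mul_sum]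

lemma gradientStep_sub_eq [DecidableEq k] (c : R) (Θ₁ Θj Θhat : Matrix n k R)
    (X W : ι → Matrix n l R) (Z : ι → Matrix k l R) (S : Finset ι)
    (hX : ∀ i, X i = (if i ∈ S then Θj else Θ₁) * Z i + W i) :
    (Θhat + c • ∑ i, (X i - Θhat * Z i) * (Z i)ᵀ) - Θ₁
      = (Θhat - Θ₁) * (1 - c • ∑ i, Z i * (Z i)ᵀ) + c • ∑ i, W i * (Z i)ᵀ
        + (Θj - Θ₁) * (c • ∑ i ∈ S, Z i * (Z i)ᵀ) := by
  rw [sum_residual_mul_transpose Θ₁ Θj Θhat X W Z S hX]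
  simp only [smul_add, smul_sub, Matrix.mul_sub, Matrix.mul_one, Matrix.mul_smul, Matrix.sub_mul]
  abel

end GradientStep

theorem stmt_10_general {nx p q m : ℕ} (η : ℝ) (hη : 0 < η)
    (Θ₁ Θj Θhat : Matrix (Fin nx) (Fin p) ℝ)
    (X W : Fin m → Matrix (Fin nx) (Fin q) ℝ)
    (Z : Fin m → Matrix (Fin p) (Fin q) ℝ)
    (Sbar : Finset (Fin m))
    (hX : ∀ i, X i = (if i ∈ Sbar then Θj else Θ₁) * Z i + W i) :
    ‖(Θhat + (2 * η / m) • ∑ i, (X i - Θhat * Z i) * (Z i)ᵀ) - Θ₁‖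
      ≤ ‖Θhat - Θ₁‖ * ‖(1 : Matrix (Fin p) (Fin p) ℝ)
            - (2 * η / m) • ∑ i, Z i * (Z i)ᵀ‖
        + (2 * η / m) * ∑ i, ‖W i * (Z i)ᵀ‖
        + ‖Θj - Θ₁‖ * (2 * η / m) * ‖∑ i ∈ Sbar, Z i * (Z i)ᵀ‖ := by
  have hc : 0 ≤ 2 * η / m := by positivity
  rw [gradientStep_sub_eq _ Θ₁ Θj Θhat X W Z Sbar hX]
  refine (norm_add₃_le ..).trans (add_le_add (add_le_add (l2_opNorm_mul _ _) ?_) ?_)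
  · rw [norm_smul, Real.norm_of_nonneg hc]
    exact mul_le_mul_of_nonneg_left (norm_sum_le _ _) hc
  · refine (l2_opNorm_mul _ _).trans_eq ?_
    rw [norm_smul, Real.norm_of_nonneg hc, mul_assoc]

/-- Triangle-inequality error bound with misclassified systems: if the systems in
`S̄` have data generated by `Θⱼ` and the rest by `Θ₁`, then after one gradient step
`‖Θ̂⁺ − Θ₁‖ ≤ ‖Θ̂ − Θ₁‖·‖I − (2η/m)ΣᵢZ⁽ⁱ⁾Z⁽ⁱ⁾ᵀ‖ + (2η/m)Σᵢ‖W⁽ⁱ⁾Z⁽ⁱ⁾ᵀ‖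
  + ‖Θⱼ − Θ₁‖·(2η/m)·‖Σ_{i∈S̄}Z⁽ⁱ⁾Z⁽ⁱ⁾ᵀ‖`. -/
theorem stmt_10 {nx p q m : ℕ} (η : ℝ) (hη : 0 < η) (hm : 0 < m)
    (Θ₁ Θj Θhat : Matrix (Fin nx) (Fin p) ℝ)
    (X W : Fin m → Matrix (Fin nx) (Fin q) ℝ)
    (Z : Fin m → Matrix (Fin p) (Fin q) ℝ)
    (Sbar : Finset (Fin m))
    (hX : ∀ i, X i = (if i ∈ Sbar then Θj else Θ₁) * Z i + W i) :
    ‖(Θhat + (2 * η / m) • ∑ i, (X i - Θhat * Z i) * (Z i)ᵀ) - Θ₁‖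
      ≤ ‖Θhat - Θ₁‖ * ‖(1 : Matrix (Fin p) (Fin p) ℝ)
            - (2 * η / m) • ∑ i, Z i * (Z i)ᵀ‖
        + (2 * η / m) * ∑ i, ‖W i * (Z i)ᵀ‖
        + ‖Θj - Θ₁‖ * (2 * η / m) * ‖∑ i ∈ Sbar, Z i * (Z i)ᵀ‖ :=
  stmt_10_general η hη Θ₁ Θj Θhat X W Z Sbar hX
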